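/- For every t ∈ [0,T), the function γ is integrable on the interval (t,T) and exp(∫_t^T γ(s) ds) = β(t); equivalently, ∫_t^T γ(s) ds = log β(t). -/

import Mathlib

open MeasureTheory Real Set Filter

/-- Standard normal cdf `N(x)`. -/
noncomputable def stdCdf (x : ℝ) : ℝ := ∫ y in Set.Iic x, Real.exp (-y ^ 2 / 2) / Real.sqrt (2 * Real.pi)

/-- Standard normal pdf `n(x)`. -/
noncomputable def stdPdf (x : ℝ) : ℝ := Real.exp (-x ^ 2 / 2) / Real.sqrt (2 * Real.pi)

/-- `β(t) = 1 + (2σ/√(2δ+σ²))·(N(√((2δ+σ²)(T−t))) − 1/2)`. -/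
noncomputable def betaIR (T σ δ t : ℝ) : ℝ :=
  1 + 2 * σ / Real.sqrt (2 * δ + σ ^ 2) *
    (stdCdf (Real.sqrt ((2 * δ + σ ^ 2) * (T - t))) - 1 / 2)

/-- `γ(t) = σ·n(√((2δ+σ²)(T−t)))/(√(T−t)·β(t))`. -/
noncomputable def gammaIR (T σ δ t : ℝ) : ℝ :=
  σ * stdPdf (Real.sqrt ((2 * δ + σ ^ 2) * (T - t))) / (Real.sqrt (T - t) * betaIR T σ δ t)

/-!
By the chain rule `β'(s) = -σ n(√((2δ+σ²)(T−s))) / √(T−s)`, so `γ = -(log β)'`. Since `N ≥ 1/2`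
on `[0, ∞)`, `β ≥ 1`, hence `γ ≥ 0`; a nonnegative derivative of a function continuous on `[t, T]`
is integrable there despite the `(T − s)^(-1/2)` singularity, and the fundamental theorem of
calculus together with `β(T) = 1` gives `∫_t^T γ = log β(t)`.
-/

theorem hasDerivAt_integral_Iic {E : Type*} [NormedAddCommGroup E] [NormedSpace ℝ E]
    [CompleteSpace E] {f : ℝ → E} (hf : Continuous f) (hfi : Integrable f) (x : ℝ) :
    HasDerivAt (fun u => ∫ y in Iic u, f y) (f x) x := by
  have hsplit :
      (fun u => ∫ y in Iic u, f y) = fun u => (∫ y in Iic 0, f y) + ∫ y in 0..u, f y := by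
    funext u
    rw [← intervalIntegral.integral_Iic_sub_Iic hfi.integrableOn hfi.integrableOn,
      add_sub_cancel]
  rw [hsplit]
  exact (intervalIntegral.integral_hasDerivAt_right (hf.intervalIntegrable _ _)
    hf.stronglyMeasurable.stronglyMeasurableAtFilter hf.continuousAt).const_add _

theorem integral_Iic_zero_of_even {E : Type*} [NormedAddCommGroup E] [NormedSpace ℝ E]
    {f : ℝ → E} (hfi : Integrable f) (heven : ∀ x, f (-x) = f x) :
    ∫ x in Iic 0, f x = (1 / 2 : ℝ) • ∫ x, f x := by
  have hsymm : ∫ x in Iic 0, f x = ∫ x in Ioi 0, f x := by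
    simpa [heven] using integral_comp_neg_Iic 0 f
  rw [← intervalIntegral.integral_Iic_add_Ioi hfi.integrableOn hfi.integrableOn, ← hsymm,
    ← two_smul ℝ]
  simp [smul_smul]

theorem stdPdf_eq_gaussianPDFReal (x : ℝ) :
    stdPdf x = ProbabilityTheory.gaussianPDFReal 0 1 x := by
  simp [stdPdf, ProbabilityTheory.gaussianPDFReal, div_eq_inv_mul]

theorem continuous_stdPdf : Continuous stdPdf := by unfold stdPdf; fun_prop

theorem stdPdf_pos (x : ℝ) : 0 < stdPdf x := by unfold stdPdf; positivity

theorem stdPdf_neg (x : ℝ) : stdPdf (-x) = stdPdf x := by simp [stdPdf]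

theorem integrable_stdPdf : Integrable stdPdf := by
  simpa only [← funext stdPdf_eq_gaussianPDFReal] using
    ProbabilityTheory.integrable_gaussianPDFReal 0 1

theorem integral_stdPdf : ∫ x, stdPdf x = 1 := by
  simpa only [← stdPdf_eq_gaussianPDFReal] using
    ProbabilityTheory.integral_gaussianPDFReal_eq_one 0 one_ne_zero

theorem stdCdf_eq_integral_stdPdf (x : ℝ) : stdCdf x = ∫ y in Iic x, stdPdf y := rfl

theorem stdCdf_zero : stdCdf 0 = 1 / 2 := by
  rw [stdCdf_eq_integral_stdPdf, integral_Iic_zero_of_even integrable_stdPdf stdPdf_neg,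
    integral_stdPdf, smul_eq_mul, mul_one]

theorem hasDerivAt_stdCdf (x : ℝ) : HasDerivAt stdCdf (stdPdf x) x :=
  hasDerivAt_integral_Iic continuous_stdPdf integrable_stdPdf x

theorem continuous_stdCdf : Continuous stdCdf :=
  continuous_iff_continuousAt.2 fun x => (hasDerivAt_stdCdf x).continuousAt

theorem half_le_stdCdf {x : ℝ} (hx : 0 ≤ x) : 1 / 2 ≤ stdCdf x := by
  rw [← stdCdf_zero, stdCdf_eq_integral_stdPdf, stdCdf_eq_integral_stdPdf]
  exact setIntegral_mono_set integrable_stdPdf.integrableOn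
    (Eventually.of_forall fun y => (stdPdf_pos y).le) (Iic_subset_Iic.2 hx).eventuallyLE

section IR

variable {T σ δ : ℝ}

theorem one_le_betaIR (hσ : 0 ≤ σ) (s : ℝ) : 1 ≤ betaIR T σ δ s := by
  have hcdf := half_le_stdCdf (Real.sqrt_nonneg ((2 * δ + σ ^ 2) * (T - s)))
  have hcoef : 0 ≤ 2 * σ / Real.sqrt (2 * δ + σ ^ 2) := by positivity
  unfold betaIR
  nlinarith

theorem betaIR_self : betaIR T σ δ T = 1 := by
  simp [betaIR, stdCdf_zero]

theorem continuous_betaIR : Continuous (betaIR T σ δ) := by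
  unfold betaIR
  have := continuous_stdCdf
  fun_prop

theorem hasDerivAt_betaIR (ha : 0 < 2 * δ + σ ^ 2) {s : ℝ} (hs : s < T) :
    HasDerivAt (betaIR T σ δ)
      (-(σ * stdPdf (Real.sqrt ((2 * δ + σ ^ 2) * (T - s))) / Real.sqrt (T - s))) s := by
  set a := 2 * δ + σ ^ 2
  have hTs : 0 < T - s := sub_pos.2 hs
  have hinner : HasDerivAt (fun u => Real.sqrt (a * (T - u)))
      (a * -1 / (2 * Real.sqrt (a * (T - s)))) s :=
    (((hasDerivAt_id s).const_sub T).const_mul a).sqrt (by positivity)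
  have hβ := (((hasDerivAt_stdCdf _).comp s hinner).sub_const (1 / 2)).const_mul
    (2 * σ / Real.sqrt a) |>.const_add 1
  refine hβ.congr_deriv ?_
  have hsa : 0 < Real.sqrt a := Real.sqrt_pos.2 ha
  have hsT : 0 < Real.sqrt (T - s) := Real.sqrt_pos.2 hTs
  rw [Real.sqrt_mul ha.le, show a * -1 = -(Real.sqrt a * Real.sqrt a) by
    rw [Real.mul_self_sqrt ha.le]; ring]
  field_simp

theorem hasDerivAt_neg_log_betaIR (hσ : 0 < σ) (hδ : 0 ≤ δ) {s : ℝ} (hs : s < T) :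
    HasDerivAt (fun u => -Real.log (betaIR T σ δ u)) (gammaIR T σ δ s) s := by
  have hβ := one_le_betaIR (T := T) (δ := δ) hσ.le s
  have hsT : 0 < Real.sqrt (T - s) := Real.sqrt_pos.2 (sub_pos.2 hs)
  refine ((hasDerivAt_betaIR (by positivity) hs).log (by positivity)).neg.congr_deriv ?_
  unfold gammaIR
  field_simp

theorem gammaIR_nonneg (hσ : 0 ≤ σ) (s : ℝ) : 0 ≤ gammaIR T σ δ s := by
  have hβ := one_le_betaIR (T := T) (δ := δ) hσ s
  have := stdPdf_pos (Real.sqrt ((2 * δ + σ ^ 2) * (T - s)))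
  unfold gammaIR
  positivity

end IR

theorem gammaIR_integral_general (T σ δ : ℝ) (hσ : 0 < σ) (hδ : 0 ≤ δ)
    (t : ℝ) (htT : t < T) :
    IntegrableOn (gammaIR T σ δ) (Set.Ioo t T) ∧
      Real.exp (∫ s in t..T, gammaIR T σ δ s) = betaIR T σ δ t ∧
      ∫ s in t..T, gammaIR T σ δ s = Real.log (betaIR T σ δ t) := by
  have hβ_pos : ∀ s, 0 < betaIR T σ δ s := fun s => one_pos.trans_le (one_le_betaIR hσ.le s)
  have hcont : ContinuousOn (fun u => -Real.log (betaIR T σ δ u)) (Icc t T) :=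
    (continuous_betaIR.continuousOn.log fun s _ => (hβ_pos s).ne').neg
  have hderiv : ∀ s ∈ Ioo t T,
      HasDerivAt (fun u => -Real.log (betaIR T σ δ u)) (gammaIR T σ δ s) s :=
    fun s hs => hasDerivAt_neg_log_betaIR hσ hδ hs.2
  have hint : IntegrableOn (gammaIR T σ δ) (Ioc t T) :=
    intervalIntegral.integrableOn_deriv_of_nonneg hcont hderiv fun s _ => gammaIR_nonneg hσ.le s
  have hFTC : ∫ s in t..T, gammaIR T σ δ s = Real.log (betaIR T σ δ t) := by
    rw [intervalIntegral.integral_eq_sub_of_hasDerivAt_of_le htT.le hcont hderiv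
      ((intervalIntegrable_iff_integrableOn_Ioc_of_le htT.le).2 hint), betaIR_self]
    simp
  exact ⟨hint.mono_set Ioo_subset_Ioc_self, by rw [hFTC, Real.exp_log (hβ_pos t)], hFTC⟩

theorem gammaIR_integral (T σ δ : ℝ) (hT : 0 < T) (hσ : 0 < σ) (hδ : 0 ≤ δ)
    (t : ℝ) (ht0 : 0 ≤ t) (htT : t < T) :
    IntegrableOn (gammaIR T σ δ) (Set.Ioo t T) ∧
      Real.exp (∫ s in t..T, gammaIR T σ δ s) = betaIR T σ δ t ∧
      ∫ s in t..T, gammaIR T σ δ s = Real.log (betaIR T σ δ t) :=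
  gammaIR_integral_general T σ δ hσ hδ t htT
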